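/- With the setup below, for every p ≥ 1: if g, h ∈ G₁ satisfy g⁻¹c^p g = h⁻¹c^p h, then gh⁻¹ ∈ E(c) and |gh⁻¹| ≤ 4K, so d(g⁻¹.o, h⁻¹.o) ≤ 4K. In particular, the map G₁ → G, g ↦ g⁻¹c^p g, has fibers of cardinality at most #{g ∈ G : |g| ≤ 4K}, which is finite by properness and independent of p. -/

import Mathlib

open Metric Set Filter Pointwise

namespace ACcogrowth

variable {X : Type*} [MetricSpace X]

/-- A map `γ` is a geodesic when restricted to the interval `[a,b]`. -/
def IsGeodesicOn (γ : ℝ → X) (a b : ℝ) : Prop :=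
  ∀ s ∈ Set.Icc a b, ∀ t ∈ Set.Icc a b, dist (γ s) (γ t) = |s - t|

/-- `X` is a geodesic metric space: any two points are joined by a geodesic. -/
def GeodesicSpace (X : Type*) [MetricSpace X] : Prop :=
  ∀ x y : X, ∃ γ : ℝ → X, IsGeodesicOn γ 0 (dist x y) ∧ γ 0 = x ∧ γ (dist x y) = y

/-- The nearest-point projection of `x` to `Y`. -/
def proj (Y : Set X) (x : X) : Set X := {y ∈ Y | dist x y = Metric.infDist x Y}

/-- The projection of a set `Z` to `Y`. -/
def projSet (Y Z : Set X) : Set X := ⋃ z ∈ Z, proj Y z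

/-- The projection distance `d^π_Y(Z,Z')`. -/
noncomputable def dpi (Y Z Z' : Set X) : ℝ := Metric.diam (projSet Y Z ∪ projSet Y Z')

/-- `Y` is `C`-strongly contracting. -/
def StronglyContractingWith (C : ℝ) (Y : Set X) : Prop :=
  0 ≤ C ∧ ∀ x x' : X, dist x x' ≤ Metric.infDist x Y →
    Metric.diam (proj Y x ∪ proj Y x') ≤ C

/-- `Y` is strongly contracting. -/
def StronglyContracting (Y : Set X) : Prop := ∃ C, StronglyContractingWith C Y

variable {G : Type*} [Group G] [MulAction G X]

/-- The action of `G` on `X` is (metrically) proper. -/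
def ProperAction (G : Type*) [Group G] [MulAction G X] (o : X) : Prop :=
  ∀ (x : X) (r : ℝ), {g : G | dist x (g • o) ≤ r}.Finite

/-- The orbit of the basepoint under the cyclic group generated by `c`. -/
def cOrbit (c : G) (o : X) : Set X := Set.range fun i : ℤ => c ^ i • o

/-- `c` is a strongly contracting element for the action. -/
def IsStronglyContractingElement (c : G) (o : X) : Prop :=
  ¬ IsOfFinOrder c ∧ StronglyContracting (cOrbit c o)

/-- The elementary closure `E(c)`: elements moving `⟨c⟩.o` a finite Hausdorff distance. -/
def Ec (c : G) (o : X) : Set G :=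
  {g : G | EMetric.hausdorffEdist (g • cOrbit c o) (cOrbit c o) ≠ ⊤}

/-- The axis `𝓔 = E(c).o`. -/
def Esub (c : G) (o : X) : Set X := (· • o) '' Ec c o

/-- The family of distinct `G`-translates of `𝓔`. -/
def translates (c : G) (o : X) : Set (Set X) := Set.range fun g : G => g • Esub c o

/-- Axiom (P0) with constant `θ` for the family of translates. -/
def AxiomP0 (c : G) (o : X) (θ : ℝ) : Prop :=
  ∀ 𝓨 ∈ translates c o, ∀ 𝓧 ∈ translates c o, 𝓧 ≠ 𝓨 → dpi 𝓨 𝓧 𝓧 ≤ θ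

/-- Axiom (P1) with constant `θ` for the family of translates. -/
def AxiomP1 (c : G) (o : X) (θ : ℝ) : Prop :=
  ∀ 𝓧 ∈ translates c o, ∀ 𝓨 ∈ translates c o, ∀ 𝓩 ∈ translates c o,
    𝓧 ≠ 𝓨 → 𝓨 ≠ 𝓩 → 𝓧 ≠ 𝓩 → dpi 𝓨 𝓧 𝓩 > θ → dpi 𝓧 𝓨 𝓩 ≤ θ

/-- `C'` is a bounded-geodesic-image constant for all translates of `𝓔`. -/
def BGIconst (c : G) (o : X) (C' : ℝ) : Prop :=
  ∀ g : G, ∀ γ : ℝ → X, ∀ a b : ℝ, IsGeodesicOn γ a b →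
    (∀ t ∈ Set.Icc a b, C' ≤ Metric.infDist (γ t) (g • Esub c o)) →
    Metric.diam (projSet (g • Esub c o) (γ '' Set.Icc a b)) ≤ C'

/-- The set `G₁`. -/
def Gone (c : G) (o : X) (K : ℝ) : Set G :=
  {g : G | dpi (Esub c o) {o} {g • o} ≤ 2 * K ∧
    dpi (g • Esub c o) {o} {g • o} ≤ 2 * K ∧ g • Esub c o ≠ Esub c o}

/-- The set `G_{2,p}` of conjugates of `c^p` by elements of `G₁`. -/
def Gtwo (c : G) (o : X) (K : ℝ) (p : ℕ) : Set G :=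
  (fun g : G => g⁻¹ * c ^ p * g) '' Gone c o K

/-- A subset `S` of `G` is `s`-separated (with respect to the orbit pseudo-metric). -/
def SeparatedSet (o : X) (s : ℝ) (S : Set G) : Prop :=
  ∀ x ∈ S, ∀ y ∈ S, x ≠ y → s ≤ dist (x • o) (y • o)

/-- There is a geodesic from `x` to `y` passing within distance `D` of `z`. -/
def GeodesicPassesNear (x y z : X) (D : ℝ) : Prop :=
  ∃ γ : ℝ → X, IsGeodesicOn γ 0 (dist x y) ∧ γ 0 = x ∧ γ (dist x y) = y ∧
    ∃ t ∈ Set.Icc 0 (dist x y), dist (γ t) z ≤ D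

/-- The shadowed subset `G'_{4,p,D}` of a given set `G₃`. -/
def Gfour' (c : G) (o : X) (G₃ : Set G) (p : ℕ) (D : ℝ) : Set G :=
  {x ∈ G₃ | ∃ y ∈ G₃, y ≠ x ∧ GeodesicPassesNear o (x • o) ((y * c ^ (2 * p)) • o) D}

/-- The growth rate of a subset `H ⊆ G` with respect to the induced pseudo-metric. -/
noncomputable def growthRate (o : X) (H : Set G) : ℝ :=
  Filter.limsup
    (fun r : ℝ => Real.log (({h ∈ H | dist o (h • o) ≤ r}).ncard) / r) Filter.atTop

/-- The growth rate of a subset `B ⊆ X`. -/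
noncomputable def growthRateX (o : X) (B : Set X) : ℝ :=
  Filter.limsup
    (fun r : ℝ => Real.log (({b ∈ B | dist o b ≤ r}).ncard) / r) Filter.atTop

/-- `H` is divergent: its Poincaré series diverges at `s = δ_H`. -/
def Divergent (o : X) (H : Set G) : Prop :=
  ¬ Summable fun h : H => Real.exp (-(growthRate o H) * dist o ((h : G) • o))

/-- `G` has purely exponential growth with rate `δ`, shell width `Δ` and constant `A`. -/
def PurelyExponentialWith (G : Type*) [Group G] [MulAction G X] (o : X)
    (δ Δ A : ℝ) : Prop :=
  0 < δ ∧ 0 < Δ ∧ 1 ≤ A ∧ ∀ r : ℝ, 0 ≤ r →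
    Real.exp (δ * r) / A ≤
        (({g : G | r < dist o (g • o) ∧ dist o (g • o) ≤ r + Δ}).ncard : ℝ) ∧
    (({g : G | r < dist o (g • o) ∧ dist o (g • o) ≤ r + Δ}).ncard : ℝ) ≤
        A * Real.exp (δ * r)

/-- `G` has purely exponential growth. -/
def PurelyExponential (G : Type*) [Group G] [MulAction G X] (o : X) : Prop :=
  ∃ δ Δ A : ℝ, PurelyExponentialWith G o δ Δ A

/-- The tree's-worth map: `(g₁, …, g_k) ↦ (g₁ c g₂ c ⋯ g_k c).o`. -/
def treeMap (o : X) (c : G) (l : List G) : X := (l.map fun g => g * c).prod • o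

/-!
If `g⁻¹ cᵖ g = h⁻¹ cᵖ h`, then `e := g h⁻¹` commutes with `cᵖ`, so it displaces every point of
`⟨c⟩.o` by at most the displacement of one of `o, c.o, …, cᵖ⁻¹.o`; hence `e ∈ E(c)` and `e` preserves
`𝓔`. Then `e` carries a projection `y` of `h.o` to `𝓔` to a projection `e.y` of `g.o`, and the
definition of `G₁` puts both within `2K` of `o`, so `|e| ≤ d(o, e.y) + d(e.y, e.o) ≤ 4K`.
A fiber of `g ↦ g⁻¹ cᵖ g` therefore injects into the `4K`-ball by `g ↦ g h₀⁻¹`.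
-/

open scoped ENNReal

theorem proj_of_mem {Y : Set X} {y : X} (hy : y ∈ Y) : proj Y y = {y} := by
  ext z
  simp only [proj, Set.mem_ofPred_eq, infDist_zero_of_mem hy, dist_eq_zero, Set.mem_singleton_iff]
  exact ⟨fun h => h.2.symm, fun h => ⟨h ▸ hy, h.symm⟩⟩

theorem projSet_singleton (Y : Set X) (z : X) : projSet Y {z} = proj Y z := by
  simp [projSet]

theorem proj_subset_closedBall (Y : Set X) (z : X) :
    proj Y z ⊆ closedBall z (infDist z Y) :=
  fun _ hy => mem_closedBall'.2 hy.2.le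

theorem proj_nonempty_of_finite_inter_closedBall {Y : Set X} {x y₀ : X} (hy₀ : y₀ ∈ Y)
    (hfin : (Y ∩ closedBall x (dist y₀ x)).Finite) : (proj Y x).Nonempty := by
  obtain ⟨y, hy, hyd⟩ :=
    hfin.isCompact.exists_infDist_eq_dist ⟨y₀, hy₀, mem_closedBall.2 le_rfl⟩ x
  rw [infDist_inter_closedBall_of_mem hy₀] at hyd
  exact ⟨y, hy.1, hyd.symm⟩

theorem dist_le_of_mem_proj_of_dpi_le {Y : Set X} {y₀ z y : X} {B : ℝ} (hy₀ : y₀ ∈ Y)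
    (hB : dpi Y {y₀} {z} ≤ B) (hy : y ∈ proj Y z) : dist y₀ y ≤ B := by
  rw [dpi, projSet_singleton, projSet_singleton, proj_of_mem hy₀] at hB
  have hbdd : Bornology.IsBounded ({y₀} ∪ proj Y z) :=
    Bornology.isBounded_singleton.union (isBounded_closedBall.subset (proj_subset_closedBall Y z))
  exact (dist_le_diam_of_mem hbdd (Or.inl rfl) (Or.inr hy)).trans hB

theorem hausdorffEDist_smul_le {Y : Set X} {g : G} {M : ℝ≥0∞}
    (hM : ∀ y ∈ Y, edist (g • y) y ≤ M) : hausdorffEDist (g • Y) Y ≤ M :=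
  hausdorffEDist_le_of_mem_edist
    (fun _ ⟨y, hy, hgy⟩ => ⟨y, hy, hgy ▸ hM y hy⟩)
    (fun y hy => ⟨g • y, Set.smul_mem_smul_set hy, edist_comm y _ ▸ hM y hy⟩)

section IsometricAction

variable [IsIsometricSMul G X]

theorem hausdorffEDist_smul (g : G) (s t : Set X) :
    hausdorffEDist (g • s) (g • t) = hausdorffEDist s t := by
  simpa only [Set.image_smul] using hausdorffEDist_image (isometry_smul X g)

theorem smul_mem_proj_smul {Y : Set X} {x y : X} (g : G) (hy : y ∈ proj Y x) :
    g • y ∈ proj (g • Y) (g • x) := by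
  have hinf : infDist (g • x) (g • Y) = infDist x Y := by
    simpa only [Set.image_smul] using infDist_image (isometry_smul X g)
  exact ⟨Set.smul_mem_smul_set hy.1, by rw [dist_smul, hinf, hy.2]⟩

variable (G) in
def coarseStabilizer (Y : Set X) : Subgroup G where
  carrier := {g | hausdorffEDist (g • Y) Y ≠ ⊤}
  one_mem' := by simp [hausdorffEDist_self]
  mul_mem' {a b} ha hb := by
    refine ne_top_of_le_ne_top ?_ (hausdorffEDist_triangle (t := a • Y))
    rw [mul_smul, hausdorffEDist_smul]
    exact ENNReal.add_ne_top.2 ⟨hb, ha⟩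
  inv_mem' {a} ha := by
    show hausdorffEDist (a⁻¹ • Y) Y ≠ ⊤
    rwa [← hausdorffEDist_smul a, smul_inv_smul, hausdorffEDist_comm]

theorem coe_coarseStabilizer_cOrbit (c : G) (o : X) :
    (coarseStabilizer G (cOrbit c o) : Set G) = Ec c o := rfl

theorem smul_Esub_of_mem_Ec {c e : G} {o : X} (he : e ∈ Ec c o) : e • Esub c o = Esub c o := by
  rw [← coe_coarseStabilizer_cOrbit] at he
  rw [Esub, ← coe_coarseStabilizer_cOrbit, ← Set.image_smul_comm _ _ _ fun g => mul_smul e g o,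
    smul_coe_set he]

theorem mem_Esub_self (c : G) (o : X) : o ∈ Esub c o := by
  refine ⟨1, ?_, one_smul G o⟩
  rw [← coe_coarseStabilizer_cOrbit]
  exact one_mem _

theorem edist_smul_zpow_smul_emod {c e : G} (o : X) {n : ℤ} (he : Commute (c ^ n) e) (i : ℤ) :
    edist (e • c ^ i • o) (c ^ i • o) = edist (e • c ^ (i % n) • o) (c ^ (i % n) • o) := by
  have hi : c ^ i = (c ^ n) ^ (i / n) * c ^ (i % n) := by
    rw [← zpow_mul, ← zpow_add, Int.mul_ediv_add_emod]
  rw [hi, mul_smul, ← mul_smul e, ← (he.zpow_left _).eq, mul_smul, edist_smul_left]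

theorem mem_Ec_of_commute_zpow {c e : G} (o : X) {n : ℤ} (hn : 0 < n)
    (he : Commute (c ^ n) e) : e ∈ Ec c o := by
  set M := (Finset.Ico 0 n).sup fun r => edist (e • c ^ r • o) (c ^ r • o)
  have hM : M ≠ ⊤ := ((Finset.sup_lt_iff bot_lt_top).2
    fun _ _ => edist_lt_top _ _).ne
  refine ne_top_of_le_ne_top hM (hausdorffEDist_smul_le ?_)
  rintro _ ⟨i, rfl⟩
  rw [edist_smul_zpow_smul_emod o he i]
  exact Finset.le_sup (f := fun r => edist (e • c ^ r • o) (c ^ r • o))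
    (Finset.mem_Ico.2 ⟨Int.emod_nonneg i hn.ne', Int.emod_lt_of_pos i hn⟩)

theorem mul_inv_mem_Ec_of_conj_eq {c g h : G} (o : X) {p : ℕ} (hp : 1 ≤ p)
    (heq : g⁻¹ * c ^ p * g = h⁻¹ * c ^ p * h) : g * h⁻¹ ∈ Ec c o := by
  refine mem_Ec_of_commute_zpow o (n := p) (by omega) ?_
  rw [zpow_natCast]
  calc c ^ p * (g * h⁻¹) = g * (g⁻¹ * c ^ p * g) * h⁻¹ := by group
    _ = g * h⁻¹ * c ^ p := by rw [heq]; group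

theorem proj_Esub_nonempty {o : X} (hproper : ProperAction G o) (c : G) (x : X) :
    (proj (Esub c o) x).Nonempty := by
  refine proj_nonempty_of_finite_inter_closedBall (mem_Esub_self c o) ?_
  refine ((hproper x (dist o x)).image (· • o)).subset ?_
  rintro _ ⟨⟨g, -, rfl⟩, hg⟩
  exact ⟨g, mem_closedBall'.1 hg, rfl⟩

theorem dist_smul_le_of_mem_Ec {c e h : G} {o : X} (hproper : ProperAction G o) {B : ℝ}
    (he : e ∈ Ec c o) (hh : dpi (Esub c o) {o} {h • o} ≤ B)
    (heh : dpi (Esub c o) {o} {(e * h) • o} ≤ B) : dist o (e • o) ≤ 2 * B := by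
  obtain ⟨y, hy⟩ := proj_Esub_nonempty hproper c (h • o)
  have hey : e • y ∈ proj (Esub c o) ((e * h) • o) := by
    simpa only [smul_Esub_of_mem_Ec he, mul_smul] using smul_mem_proj_smul e hy
  calc dist o (e • o) ≤ dist o (e • y) + dist (e • y) (e • o) := dist_triangle _ _ _
    _ = dist o (e • y) + dist o y := by rw [dist_smul, dist_comm y o]
    _ ≤ B + B := add_le_add (dist_le_of_mem_proj_of_dpi_le (mem_Esub_self c o) heh hey)
        (dist_le_of_mem_proj_of_dpi_le (mem_Esub_self c o) hh hy)
    _ = 2 * B := by ring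

theorem dist_inv_smul_inv_smul (g h : G) (o : X) :
    dist (g⁻¹ • o) (h⁻¹ • o) = dist o ((g * h⁻¹) • o) := by
  rw [← dist_smul g, smul_inv_smul, mul_smul]

theorem dist_mul_inv_smul_le_of_conj_eq {c g h : G} {o : X} (hproper : ProperAction G o)
    {K : ℝ} {p : ℕ} (hp : 1 ≤ p) (hg : g ∈ Gone c o K) (hh : h ∈ Gone c o K)
    (heq : g⁻¹ * c ^ p * g = h⁻¹ * c ^ p * h) : dist o ((g * h⁻¹) • o) ≤ 4 * K := by
  have hg' : dpi (Esub c o) {o} {(g * h⁻¹ * h) • o} ≤ 2 * K := by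
    rw [inv_mul_cancel_right]
    exact hg.1
  linarith [dist_smul_le_of_mem_Ec hproper (mul_inv_mem_Ec_of_conj_eq o hp heq) hh.1 hg']

end IsometricAction

theorem ncard_le_ncard_of_mul_inv_mem {F S : Set G} (hS : S.Finite)
    (hFS : ∀ g ∈ F, ∀ h ∈ F, g * h⁻¹ ∈ S) : F.ncard ≤ S.ncard := by
  rcases F.eq_empty_or_nonempty with rfl | ⟨h, hh⟩
  · simp
  calc F.ncard = ((· * h⁻¹) '' F).ncard :=
        (Set.ncard_image_of_injective F (mul_left_injective h⁻¹)).symm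
    _ ≤ S.ncard := Set.ncard_le_ncard (Set.image_subset_iff.2 fun g hg => hFS g hg h hh) hS

theorem conjugation_map_bounded_to_one_general
    {G : Type*} [Group G] {X : Type*} [MetricSpace X]
    [MulAction G X] [IsIsometricSMul G X] (o : X)
    (hproper : ProperAction G o)
    (c : G)
    (K : ℝ) :
    (∀ p : ℕ, 1 ≤ p → ∀ g ∈ Gone c o K, ∀ h ∈ Gone c o K,
      g⁻¹ * c ^ p * g = h⁻¹ * c ^ p * h →
        g * h⁻¹ ∈ Ec c o ∧ dist o ((g * h⁻¹) • o) ≤ 4 * K ∧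
        dist (g⁻¹ • o) (h⁻¹ • o) ≤ 4 * K) ∧
    ({g : G | dist o (g • o) ≤ 4 * K}).Finite ∧
    (∀ p : ℕ, 1 ≤ p → ∀ x : G,
      ({g ∈ Gone c o K | g⁻¹ * c ^ p * g = x}).ncard ≤
        ({g : G | dist o (g • o) ≤ 4 * K}).ncard) := by
  have hfin := hproper o (4 * K)
  refine ⟨fun p hp g hg h hh heq => ?_, hfin, fun p hp x => ?_⟩
  · have hdist := dist_mul_inv_smul_le_of_conj_eq hproper hp hg hh heq
    exact ⟨mul_inv_mem_Ec_of_conj_eq o hp heq, hdist,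
      (dist_inv_smul_inv_smul g h o).trans_le hdist⟩
  · exact ncard_le_ncard_of_mul_inv_mem hfin fun g hg h hh =>
      dist_mul_inv_smul_le_of_conj_eq hproper hp hg.1 hh.1 (hg.2.trans hh.2.symm)

/-- **Lemma.** For every `p ≥ 1`, if `g, h ∈ G₁` satisfy `g⁻¹c^p g = h⁻¹c^p h`, then
`gh⁻¹ ∈ E(c)` and `|gh⁻¹| ≤ 4K`, so `d(g⁻¹.o, h⁻¹.o) ≤ 4K`; in particular the map
`g ↦ g⁻¹c^p g` on `G₁` has fibers of cardinality at most `#{g : |g| ≤ 4K}`, which is finite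
by properness and independent of `p`. -/
theorem conjugation_map_bounded_to_one
    {G : Type*} [Group G] {X : Type*} [MetricSpace X]
    [MulAction G X] [IsIsometricSMul G X] (o : X)
    (hgeo : GeodesicSpace X)
    (hproper : ProperAction G o)
    (c : G) (hc : IsStronglyContractingElement c o)
    (K : ℝ) (hK : 0 ≤ K) :
    (∀ p : ℕ, 1 ≤ p → ∀ g ∈ Gone c o K, ∀ h ∈ Gone c o K,
      g⁻¹ * c ^ p * g = h⁻¹ * c ^ p * h →
        g * h⁻¹ ∈ Ec c o ∧ dist o ((g * h⁻¹) • o) ≤ 4 * K ∧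
        dist (g⁻¹ • o) (h⁻¹ • o) ≤ 4 * K) ∧
    ({g : G | dist o (g • o) ≤ 4 * K}).Finite ∧
    (∀ p : ℕ, 1 ≤ p → ∀ x : G,
      ({g ∈ Gone c o K | g⁻¹ * c ^ p * g = x}).ncard ≤
        ({g : G | dist o (g • o) ≤ 4 * K}).ncard) :=
  conjugation_map_bounded_to_one_general o hproper c K

end ACcogrowth
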